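/- There is an absolute constant C > 0 such that for every set A of positive integers and every nonidentity γ ∈ Γ_A with Frobenius norm ‖γ‖ ≥ C, the following holds: for all unit vectors v₊, v₋ ∈ ℝ² satisfying γ·v₊ = λ₊(γ)·v₊ and γ·v₋ = λ₋(γ)·v₋, one has |⟨v₊, v₋^⊥⟩| ≥ 1/2, where for v = (x,y) we set v^⊥ = (−y,x) and ⟨·,·⟩ is the standard inner product on ℝ². -/

import Mathlib

/-- The generator matrix `[[0,1],[1,a]]`. -/
def cfGen (a : ℕ) : Matrix (Fin 2) (Fin 2) ℤ := !![0, 1; 1, (a : ℤ)]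

/-- The determinant-one semigroup `Γ_A`: all nonempty finite products of the
generators `[[0,1],[1,a]]·[[0,1],[1,a']]` with `a, a' ∈ A`. -/
def GammaSemigroup (A : Set ℕ) : Set (Matrix (Fin 2) (Fin 2) ℤ) :=
  { M | ∃ l : List (ℕ × ℕ), l ≠ [] ∧ (∀ p ∈ l, p.1 ∈ A ∧ p.2 ∈ A) ∧
      M = (l.map (fun p => cfGen p.1 * cfGen p.2)).prod }

/-- The expanding eigenvalue `λ₊(γ) = (tr γ + √((tr γ)² − 4))/2` of a
determinant-one matrix with trace `> 2`. -/
noncomputable def lamPlus (γ : Matrix (Fin 2) (Fin 2) ℤ) : ℝ :=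
  (((γ 0 0 + γ 1 1 : ℤ) : ℝ) + Real.sqrt (((γ 0 0 + γ 1 1 : ℤ) : ℝ) ^ 2 - 4)) / 2

/-- The contracting eigenvalue `λ₋(γ) = (tr γ − √((tr γ)² − 4))/2`. -/
noncomputable def lamMinus (γ : Matrix (Fin 2) (Fin 2) ℤ) : ℝ :=
  (((γ 0 0 + γ 1 1 : ℤ) : ℝ) - Real.sqrt (((γ 0 0 + γ 1 1 : ℤ) : ℝ) ^ 2 - 4)) / 2

/-!
Every element of `Γ_A` is a matrix `[[a, b], [c, d]]` with `0 < a`, entries increasing along rows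
and columns, and determinant one: the generators `[[1, a'], [a, 1 + a a']]` are of this form and the
property is stable under products. For such a matrix, with `s² = (tr)² - 4 det = (d - a)² + 4bc`,
the eigenvector equations `b v₁ = (λ - a) v₀` give, for unit eigenvectors `v₊, v₋`,
`det(v₊, v₋)² · (s² + (b - c)²) = s²`. Monotonicity gives `|b - c| ≤ d - a`, hence
`(b - c)² ≤ s²` and `det(v₊, v₋)² ≥ 1/2`.
-/

namespace Matrix

variable {R : Type*}

structure PosRowColMonotone [Semiring R] [PartialOrder R] (M : Matrix (Fin 2) (Fin 2) R) :
    Prop where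
  pos : 0 < M 0 0
  row0 : M 0 0 ≤ M 0 1
  row1 : M 1 0 ≤ M 1 1
  col0 : M 0 0 ≤ M 1 0
  col1 : M 0 1 ≤ M 1 1

namespace PosRowColMonotone

theorem map [Semiring R] [PartialOrder R] {S : Type*} [Semiring S] [PartialOrder S]
    {M : Matrix (Fin 2) (Fin 2) R} (hM : PosRowColMonotone M) (f : R →+* S)
    (hf : StrictMono f) : PosRowColMonotone (M.map f) where
  pos := by simpa using hf hM.pos
  row0 := hf.monotone hM.row0
  row1 := hf.monotone hM.row1
  col0 := hf.monotone hM.col0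
  col1 := hf.monotone hM.col1

section OrderedSemiring

variable [Semiring R] [PartialOrder R] [IsStrictOrderedRing R] {M N : Matrix (Fin 2) (Fin 2) R}

theorem mul (hM : PosRowColMonotone M) (hN : PosRowColMonotone N) :
    PosRowColMonotone (M * N) := by
  obtain ⟨ha, hab, hcd, hac, hbd⟩ := hM
  obtain ⟨he, hef, hgh, heg, hfh⟩ := hN
  have hb : 0 ≤ M 0 1 := (ha.trans_le hab).le
  have hc : 0 ≤ M 1 0 := (ha.trans_le hac).le
  have hd : 0 ≤ M 1 1 := hc.trans hcd
  have hf : 0 ≤ N 0 1 := (he.trans_le hef).le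
  have hg : 0 ≤ N 1 0 := (he.trans_le heg).le
  have hh : 0 ≤ N 1 1 := hg.trans hgh
  constructor <;> simp only [mul_apply, Fin.sum_univ_two]
  · exact add_pos_of_pos_of_nonneg (mul_pos ha he) (mul_nonneg hb hg)
  all_goals gcongr

theorem list_prod {l : List (Matrix (Fin 2) (Fin 2) R)} (hl : l ≠ [])
    (h : ∀ M ∈ l, PosRowColMonotone M) : PosRowColMonotone l.prod := by
  induction l with
  | nil => exact absurd rfl hl
  | cons M t ih =>
    rw [List.prod_cons]
    rcases eq_or_ne t [] with rfl | ht
    · simpa using h M List.mem_cons_self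
    · exact (h M List.mem_cons_self).mul (ih ht fun N hN => h N (List.mem_cons_of_mem M hN))

end OrderedSemiring

end PosRowColMonotone

variable {M : Matrix (Fin 2) (Fin 2) ℝ} {v w : Fin 2 → ℝ} {s : ℝ}

theorem PosRowColMonotone.discr_pos (hM : PosRowColMonotone M) :
    0 < M.trace ^ 2 - 4 * M.det := by
  have hb : 0 < M 0 1 := hM.pos.trans_le hM.row0
  have hc : 0 < M 1 0 := hM.pos.trans_le hM.col0
  rw [trace_fin_two, det_fin_two]
  nlinarith [mul_pos hb hc, sq_nonneg (M 1 1 - M 0 0)]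
theorem mul_apply_one_eq_of_mulVec_eq_smul {μ : ℝ} (h : M *ᵥ v = μ • v) :
    M 0 1 * v 1 = (μ - M 0 0) * v 0 := by
  have h0 := congrFun h 0
  simp only [mulVec, dotProduct, Fin.sum_univ_two, Pi.smul_apply, smul_eq_mul] at h0
  linear_combination h0

theorem sq_cross_mul_eq_of_eigenvectors (hb : M 0 1 ≠ 0) (hs : s ^ 2 = M.trace ^ 2 - 4 * M.det)
    (hv : v 0 ^ 2 + v 1 ^ 2 = 1) (hw : w 0 ^ 2 + w 1 ^ 2 = 1)
    (hMv : M *ᵥ v = ((M.trace + s) / 2) • v) (hMw : M *ᵥ w = ((M.trace - s) / 2) • w) :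
    (v 0 * w 1 - v 1 * w 0) ^ 2 * (s ^ 2 + (M 0 1 - M 1 0) ^ 2) = s ^ 2 := by
  have hv1 := mul_apply_one_eq_of_mulVec_eq_smul hMv
  have hw1 := mul_apply_one_eq_of_mulVec_eq_smul hMw
  rw [trace_fin_two] at hs hv1 hw1
  rw [det_fin_two] at hs
  set a := M 0 0
  set b := M 0 1
  set c := M 1 0
  set d := M 1 1
  set D := v 0 * w 1 - v 1 * w 0
  set P := 4 * b ^ 2 + (d - a + s) ^ 2
  set Q := 4 * b ^ 2 + (d - a - s) ^ 2
  have hvP : v 0 ^ 2 * P = 4 * b ^ 2 := by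
    linear_combination 4 * b ^ 2 * hv - (2 * b * v 1 + (d - a + s) * v 0) * hv1 * 2
  have hwQ : w 0 ^ 2 * Q = 4 * b ^ 2 := by
    linear_combination 4 * b ^ 2 * hw - (2 * b * w 1 + (d - a - s) * w 0) * hw1 * 2
  have hbD : b * D = -(s * (v 0 * w 0)) := by
    linear_combination v 0 * hw1 - w 0 * hv1
  have hPQ : P * Q = 16 * b ^ 2 * (s ^ 2 + (b - c) ^ 2) := by
    linear_combination (-(8 * b ^ 2) - (d - a) ^ 2 + s ^ 2 + 4 * b * c) * hs
  have hb4 : (16 * b ^ 4 : ℝ) ≠ 0 := by positivity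
  apply mul_left_cancel₀ hb4
  calc 16 * b ^ 4 * (D ^ 2 * (s ^ 2 + (b - c) ^ 2)) = (b * D) ^ 2 * (P * Q) := by
        rw [hPQ]; ring
    _ = s ^ 2 * ((v 0 ^ 2 * P) * (w 0 ^ 2 * Q)) := by rw [hbD]; ring
    _ = 16 * b ^ 4 * s ^ 2 := by rw [hvP, hwQ]; ring

theorem PosRowColMonotone.half_le_sq_cross_of_eigenvectors (hM : PosRowColMonotone M)
    (hs : s ^ 2 = M.trace ^ 2 - 4 * M.det)
    (hv : v 0 ^ 2 + v 1 ^ 2 = 1) (hw : w 0 ^ 2 + w 1 ^ 2 = 1)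
    (hMv : M *ᵥ v = ((M.trace + s) / 2) • v) (hMw : M *ᵥ w = ((M.trace - s) / 2) • w) :
    1 / 2 ≤ (v 0 * w 1 - v 1 * w 0) ^ 2 := by
  have hb : M 0 1 ≠ 0 := (hM.pos.trans_le hM.row0).ne'
  have hcross := sq_cross_mul_eq_of_eigenvectors hb hs hv hw hMv hMw
  have hs_pos : 0 < s ^ 2 := hs ▸ hM.discr_pos
  have hbc : (M 0 1 - M 1 0) ^ 2 ≤ (M 1 1 - M 0 0) ^ 2 :=
    sq_le_sq' (by linarith [hM.row0, hM.row1]) (by linarith [hM.col0, hM.col1])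
  have hbc_le : (M 0 1 - M 1 0) ^ 2 ≤ s ^ 2 := by
    rw [hs, trace_fin_two, det_fin_two]
    nlinarith [mul_pos (hM.pos.trans_le hM.row0) (hM.pos.trans_le hM.col0)]
  have h : 1 * s ^ 2 ≤ 2 * (v 0 * w 1 - v 1 * w 0) ^ 2 * s ^ 2 := by
    nlinarith [mul_le_mul_of_nonneg_left hbc_le (sq_nonneg (v 0 * w 1 - v 1 * w 0))]
  linarith [le_of_mul_le_mul_right h hs_pos]

end Matrix

theorem cfGen_mul_cfGen (a a' : ℕ) :
    cfGen a * cfGen a' = !![1, (a' : ℤ); (a : ℤ), 1 + a * a'] := by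
  ext i j
  fin_cases i <;> fin_cases j <;> simp [cfGen, Matrix.mul_apply, Fin.sum_univ_two]

theorem posRowColMonotone_cfGen_mul_cfGen {a a' : ℕ} (ha : 0 < a) (ha' : 0 < a') :
    (cfGen a * cfGen a').PosRowColMonotone := by
  have ha1 : (1 : ℤ) ≤ a := by exact_mod_cast ha
  have ha1' : (1 : ℤ) ≤ a' := by exact_mod_cast ha'
  rw [cfGen_mul_cfGen]
  constructor <;>
    simp only [Matrix.of_apply, Matrix.cons_val', Matrix.cons_val_zero, Matrix.cons_val_one,
      Matrix.cons_val_fin_one] <;>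
    nlinarith

theorem det_cfGen_mul_cfGen (a a' : ℕ) : (cfGen a * cfGen a').det = 1 := by
  rw [cfGen_mul_cfGen, Matrix.det_fin_two_of]
  ring

theorem posRowColMonotone_of_mem_gammaSemigroup {A : Set ℕ} (hA : ∀ a ∈ A, 0 < a)
    {γ : Matrix (Fin 2) (Fin 2) ℤ} (hγ : γ ∈ GammaSemigroup A) : γ.PosRowColMonotone := by
  obtain ⟨l, hl, hlA, rfl⟩ := hγ
  refine Matrix.PosRowColMonotone.list_prod (by simpa using hl) ?_
  simp only [List.mem_map, forall_exists_index, and_imp]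
  rintro _ p hp rfl
  exact posRowColMonotone_cfGen_mul_cfGen (hA _ (hlA p hp).1) (hA _ (hlA p hp).2)

theorem det_of_mem_gammaSemigroup {A : Set ℕ} {γ : Matrix (Fin 2) (Fin 2) ℤ}
    (hγ : γ ∈ GammaSemigroup A) : γ.det = 1 := by
  obtain ⟨l, -, -, rfl⟩ := hγ
  rw [← Matrix.coe_detMonoidHom, map_list_prod, List.map_map]
  exact List.prod_eq_one fun x hx => by
    obtain ⟨p, -, rfl⟩ := List.mem_map.mp hx
    exact det_cfGen_mul_cfGen p.1 p.2

/-- For every `γ ∈ Γ_A` of sufficiently large Frobenius norm, the normalized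
expanding and contracting eigenvectors satisfy `|⟨v₊, v₋^⊥⟩| ≥ 1/2`. -/
theorem eigenvector_inner_product_large :
    ∃ C : ℝ, 0 < C ∧
      ∀ (A : Set ℕ), (∀ a ∈ A, 0 < a) →
        ∀ γ ∈ GammaSemigroup A, γ ≠ 1 →
          C ≤ Real.sqrt ((γ 0 0 : ℝ) ^ 2 + (γ 0 1 : ℝ) ^ 2 + (γ 1 0 : ℝ) ^ 2 + (γ 1 1 : ℝ) ^ 2) →
          ∀ vp vm : Fin 2 → ℝ,
            vp 0 ^ 2 + vp 1 ^ 2 = 1 →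
            vm 0 ^ 2 + vm 1 ^ 2 = 1 →
            (γ.map ((↑) : ℤ → ℝ)).mulVec vp = lamPlus γ • vp →
            (γ.map ((↑) : ℤ → ℝ)).mulVec vm = lamMinus γ • vm →
            1 / 2 ≤ |vp 0 * (-(vm 1)) + vp 1 * vm 0| := by
  refine ⟨1, one_pos, fun A hA γ hγ _ _ vp vm hvp hvm hp hm => ?_⟩
  set M := γ.map ((↑) : ℤ → ℝ)
  have hM : M.PosRowColMonotone :=
    (posRowColMonotone_of_mem_gammaSemigroup hA hγ).map (Int.castRingHom ℝ) Int.cast_strictMono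
  have htr : ((γ 0 0 + γ 1 1 : ℤ) : ℝ) = M.trace := by
    simp [M, Matrix.trace_fin_two]
  have hdet : M.det = 1 := by
    rw [← Int.cast_det, det_of_mem_gammaSemigroup hγ, Int.cast_one]
  set s := Real.sqrt (M.trace ^ 2 - 4)
  have hs : s ^ 2 = M.trace ^ 2 - 4 * M.det := by
    rw [hdet, mul_one]
    exact Real.sq_sqrt (by simpa [hdet] using hM.discr_pos.le)
  have hcross := hM.half_le_sq_cross_of_eigenvectors hs hvp hvm
    (by rwa [lamPlus, htr] at hp) (by rwa [lamMinus, htr] at hm)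
  have hquarter : (1 / 2 : ℝ) ^ 2 ≤ (vp 0 * -vm 1 + vp 1 * vm 0) ^ 2 := by
    linarith [show (vp 0 * -vm 1 + vp 1 * vm 0) ^ 2 = (vp 0 * vm 1 - vp 1 * vm 0) ^ 2 by ring]
  simpa using sq_le_sq.mp hquarter
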